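/- arXiv:2110.02376 — 4 statements merged into one kernel-verified Lean document; each statement's English description precedes it below -/
import Mathlib

section
/- Let (w, t) be a perceptron of dimension n and e ∈ {0,1,⊥}^n a partial instance. Then every completion e' of e satisfies w · e' < t if and only if (Σ over i with e[i] ∈ {0,1} of w_i·e[i]) + (Σ over i with e[i] = ⊥ of max(0, w_i)) < t. -/
/-- A partial instance of dimension `n` is a tuple in `{0,1,⊥}^n`. -/
def Subsumes {n : ℕ} (e₁ e₂ : Fin n → Option Bool) : Prop :=
  ∀ i, e₁ i ≠ none → e₁ i = e₂ i

/-! The weighted sum is maximised coordinatewise: a fixed coordinate contributes `w i * e[i]`,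
and a free one contributes at most `max 0 (w i)`, attained by setting it to `1` exactly when
`0 ≤ w i`. So the sum in the statement is the largest value of `w · e'` over all completions. -/

section Completions

variable {R : Type*} [Semiring R] [LinearOrder R] {n : ℕ}

theorem subsumes_some_iff {e : Fin n → Option Bool} {e' : Fin n → Bool} :
    Subsumes e (fun i => some (e' i)) ↔ ∀ i b, e i = some b → e' i = b := by
  refine forall_congr' fun i => ?_
  cases e i <;> simp [eq_comm]

theorem mul_ite_le_max_zero (x : R) (b : Bool) : x * (if b then 1 else 0) ≤ max 0 x := by
  cases b <;> simp

theorem mul_ite_decide_nonneg (x : R) : x * (if decide (0 ≤ x) then 1 else 0) = max 0 x := by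
  rcases le_or_gt 0 x with hx | hx
  · simp [hx]
  · simp [hx.not_ge, hx.le]

def greedyCompletion (w : Fin n → R) (e : Fin n → Option Bool) : Fin n → Bool :=
  fun i => (e i).elim (decide (0 ≤ w i)) id

theorem subsumes_greedyCompletion (w : Fin n → R) (e : Fin n → Option Bool) :
    Subsumes e (fun i => some (greedyCompletion w e i)) :=
  subsumes_some_iff.2 fun i b hb => by simp [greedyCompletion, hb]

theorem sum_greedyCompletion (w : Fin n → R) (e : Fin n → Option Bool) :
    ∑ i, w i * (if greedyCompletion w e i then 1 else 0) =
      ∑ i, (e i).elim (max 0 (w i)) (fun b => w i * (if b then 1 else 0)) := by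
  refine Finset.sum_congr rfl fun i _ => ?_
  cases hei : e i with
  | none => simpa [greedyCompletion, hei] using mul_ite_decide_nonneg (w i)
  | some b => simp [greedyCompletion, hei]

theorem sum_le_of_subsumes [IsOrderedAddMonoid R] (w : Fin n → R) {e : Fin n → Option Bool}
    {e' : Fin n → Bool} (he' : Subsumes e (fun i => some (e' i))) :
    ∑ i, w i * (if e' i then 1 else 0) ≤
      ∑ i, (e i).elim (max 0 (w i)) (fun b => w i * (if b then 1 else 0)) := by
  refine Finset.sum_le_sum fun i _ => ?_
  cases hei : e i with
  | none => exact mul_ite_le_max_zero (w i) (e' i)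
  | some b => simp [subsumes_some_iff.1 he' i b hei]

end Completions

theorem allCompletionsNeg_iff {n : ℕ} (w : Fin n → ℝ) (t : ℝ) (e : Fin n → Option Bool) :
    (∀ e' : Fin n → Bool, Subsumes e (fun i => some (e' i)) →
        ∑ i, w i * (if e' i then 1 else 0) < t) ↔
    (∑ i, (e i).elim (max 0 (w i)) (fun b => w i * (if b then 1 else 0))) < t := by
  refine ⟨fun h => ?_, fun h e' he' => (sum_le_of_subsumes w he').trans_lt h⟩
  rw [← sum_greedyCompletion]
  exact h _ (subsumes_greedyCompletion w e)
end

section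
/- Let (w, t) be a perceptron of dimension n and let e ∈ {0,1,⊥,◇}^n be an undetermined instance (where ◇ marks components that may be freely set to 0, 1 or ⊥, while ⊥ components must remain ⊥). Then there exists a determinization e' ∈ {0,1,⊥}^n of e (i.e., e'[i] = e[i] whenever e[i] ≠ ◇) such that every completion of e' is positive, if and only if (Σ over i with e[i] ∈ {0,1} of w_i·e[i]) + (Σ over i with e[i] = ⊥ of min(0, w_i)) + (Σ over i with e[i] = ◇ of max(0, w_i)) ≥ t. -/
/-- Values of undetermined instances: 0/1, ⊥, or ◇ (undetermined). -/
inductive UVal : Type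
  | val : Bool → UVal
  | bot : UVal
  | diamond : UVal

/-- e' is a determinization of e: it agrees with e on every non-◇ component. -/
def Determinizes {n : ℕ} (e : Fin n → UVal) (e' : Fin n → Option Bool) : Prop :=
  ∀ i, (∀ b, e i = UVal.val b → e' i = some b) ∧ (e i = UVal.bot → e' i = none)

lemma aux_le_max (x : ℝ) (c : Bool) : x * (if c then 1 else 0) ≤ max 0 x := by
  cases c <;> simp

lemma aux_min_le (x : ℝ) (c : Bool) : min 0 x ≤ x * (if c then 1 else 0) := by
  cases c <;> simp

theorem determinizationAllPos_iff {n : ℕ} (w : Fin n → ℝ) (t : ℝ) (e : Fin n → UVal) :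
    (∃ e' : Fin n → Option Bool, Determinizes e e' ∧
        ∀ e'' : Fin n → Bool, Subsumes e' (fun i => some (e'' i)) →
          t ≤ ∑ i, w i * (if e'' i then 1 else 0)) ↔
    t ≤ ∑ i, (match e i with
        | UVal.val b => w i * (if b then 1 else 0)
        | UVal.bot => min 0 (w i)
        | UVal.diamond => max 0 (w i)) := by
  constructor
  · rintro ⟨e', hd, hpos⟩
    set e'' : Fin n → Bool := fun i => match e' i with
      | some b => b
      | none => decide (w i < 0) with he''
    have hsub : Subsumes e' (fun i => some (e'' i)) := by
      intro i hi
      cases h : e' i with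
      | none => exact absurd h hi
      | some b => simp [he'', h]
    refine (hpos e'' hsub).trans (Finset.sum_le_sum fun i _ => ?_)
    rcases hE : e i with b | _ | _
    · have hb := (hd i).1 b hE
      simp [he'', hb]
    · have hb := (hd i).2 hE
      simp only [he'', hb]
      rcases lt_or_ge (w i) 0 with h | h
      · simp [h, min_eq_right h.le]
      · simp [not_lt.2 h, min_eq_left h]
    · exact aux_le_max (w i) (e'' i)
  · intro ht
    refine ⟨fun i => match e i with
      | UVal.val b => some b
      | UVal.bot => none
      | UVal.diamond => some (decide (0 ≤ w i)),
      fun i => ⟨fun b hb => by simp [hb], fun hb => by simp [hb]⟩, ?_⟩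
    intro e'' hsub
    refine ht.trans (Finset.sum_le_sum fun i _ => ?_)
    rcases hE : e i with b | _ | _
    · have := hsub i (by simp [hE])
      simp only [hE] at this
      have hb : e'' i = b := by
        simpa using this.symm
      simp [hE, hb]
    · simpa [hE] using aux_min_le (w i) (e'' i)
    · have := hsub i (by simp [hE])
      simp only [hE] at this
      have hb : e'' i = decide (0 ≤ w i) := by simpa using this.symm
      rcases le_or_gt 0 (w i) with h | h
      · simp [hE, hb, h, max_eq_right h]
      · simp [hE, hb, not_le.2 h, max_eq_left h.le]
end

section
/- Let s_1, ..., s_n, k be natural numbers, and let M be the perceptron of dimension n+1 with weights w_i = s_i for i = 1,...,n, weight w_{n+1} = 1, and threshold k+1 (thus M(e) = 1 iff Σ_{i=1}^{n} s_i·e[i] + e[n+1] ≥ k+1). Then there exist full instances e1, e2 ∈ {0,1}^{n+1} that agree on the first n components and satisfy M(e1) ≠ M(e2), if and only if there exists a subset S ⊆ {1,...,n} with Σ_{i∈S} s_i = k. -/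
/-- The perceptron with weights s₁,…,sₙ on unprotected features, weight 1 on the
protected feature n+1, and threshold k+1, classifies e as positive. -/
def PPos {n : ℕ} (s : Fin n → ℕ) (k : ℕ) (e : Fin (n + 1) → Bool) : Prop :=
  k + 1 ≤ (∑ i : Fin n, s i * (if e i.castSucc then 1 else 0)) +
    (if e (Fin.last n) then 1 else 0)

theorem biased_iff_subsetSum {n : ℕ} (s : Fin n → ℕ) (k : ℕ) :
    (∃ e₁ e₂ : Fin (n + 1) → Bool,
        (∀ i : Fin n, e₁ i.castSucc = e₂ i.castSucc) ∧
        ((PPos s k e₁ ∧ ¬ PPos s k e₂) ∨ (¬ PPos s k e₁ ∧ PPos s k e₂))) ↔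
    ∃ S : Finset (Fin n), ∑ i ∈ S, s i = k := by
  constructor
  · rintro ⟨e₁, e₂, hagree, h⟩
    refine ⟨Finset.univ.filter (fun i => e₁ i.castSucc = true), ?_⟩
    have hsum : ∀ e : Fin (n+1) → Bool, (∀ i : Fin n, e i.castSucc = e₁ i.castSucc) →
        (∑ i : Fin n, s i * (if e i.castSucc then 1 else 0)) =
        ∑ i ∈ Finset.univ.filter (fun i => e₁ i.castSucc = true), s i := by
      intro e he
      rw [Finset.sum_filter]
      apply Finset.sum_congr rfl
      intro i _
      rw [he i]
      by_cases h : e₁ i.castSucc <;> simp [h]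
    set T := ∑ i ∈ Finset.univ.filter (fun i => e₁ i.castSucc = true), s i with hT
    have h1 := hsum e₁ (fun i => rfl)
    have h2 := hsum e₂ (fun i => (hagree i).symm)
    unfold PPos at h
    rw [h1] at h
    rw [h2] at h
    -- now h : (k+1 ≤ T + b₁ ∧ ¬ k+1 ≤ T + b₂) ∨ ...
    rcases h with ⟨ha, hb⟩ | ⟨ha, hb⟩ <;>
    · by_cases c1 : e₁ (Fin.last n) <;> by_cases c2 : e₂ (Fin.last n) <;>
        simp [c1, c2] at ha hb <;> omega
  · rintro ⟨S, hS⟩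
    refine ⟨fun j => if h : j = Fin.last n then true else decide (⟨j, by
        rcases Fin.eq_castSucc_or_eq_last j with ⟨i, rfl⟩ | rfl
        · exact i.isLt
        · exact absurd rfl h⟩ ∈ S),
      fun j => if h : j = Fin.last n then false else decide (⟨j, by
        rcases Fin.eq_castSucc_or_eq_last j with ⟨i, rfl⟩ | rfl
        · exact i.isLt
        · exact absurd rfl h⟩ ∈ S), ?_, ?_⟩
    · intro i
      have hne : i.castSucc ≠ Fin.last n := (Fin.castSucc_lt_last i).ne
      simp [hne]
    · left
      have hlast : (Fin.last n : Fin (n+1)) = Fin.last n := rfl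
      have hne : ∀ i : Fin n, i.castSucc ≠ Fin.last n := fun i => (Fin.castSucc_lt_last i).ne
      have hsum : ∀ b : Bool, (∑ i : Fin n, s i * (if (fun j => if h : j = Fin.last n then b
            else decide (⟨j, by
              rcases Fin.eq_castSucc_or_eq_last j with ⟨i, rfl⟩ | rfl
              · exact i.isLt
              · exact absurd rfl h⟩ ∈ S)) i.castSucc then 1 else 0)) = k := by
        intro b
        rw [← hS, show (∑ i ∈ S, s i) = ∑ i : Fin n, s i * (if i ∈ S then 1 else 0) from by
          simp [mul_ite, Finset.sum_ite_mem]]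
        apply Finset.sum_congr rfl
        intro i _
        simp only [hne i, dif_neg, decide_eq_true_eq]
        simp only [Fin.coe_castSucc, Fin.eta]
        by_cases h : i ∈ S <;> simp [h]
      constructor
      · unfold PPos
        rw [hsum true]
        simp
      · unfold PPos
        rw [hsum false]
        simp
end

section
/- There is no existential first-order formula φ(x) over the vocabulary {Pos (unary), ⊆ (binary)} such that for every dimension n ≥ 1, every Boolean classifier M : {0,1}^n → {0,1}, and every partial instance e ∈ {0,1,⊥}^n, the structure A_M satisfies φ(e) if and only if e is a full instance. (A_M has domain {0,1,⊥}^n, interprets Pos as the set of full instances classified positively by M, and interprets ⊆ as subsumption.) -/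
open FirstOrder FirstOrder.Language

/-- The vocabulary of FOIL: one unary relation `Pos` and one binary relation `⊆`. -/
def FoilLang : FirstOrder.Language where
  Functions := fun _ => Empty
  Relations := fun n =>
    match n with
    | 1 => PUnit
    | 2 => PUnit
    | _ => Empty

/-- The structure A_M associated to a Boolean classifier M: the domain is the set of
partial instances, Pos holds of full instances classified positively, and the binary
relation is subsumption. -/
def foilStructure (n : ℕ) (M : (Fin n → Bool) → Bool) :
    FoilLang.Structure (Fin n → Option Bool) where
  funMap := fun {_} f _ => f.elim
  RelMap := fun {k} r v =>
    match k, r, v with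
    | 0, r, _ => r.elim
    | 1, _, v => ∃ e' : Fin n → Bool, (∀ i, v 0 i = some (e' i)) ∧ M e' = true
    | 2, _, v => Subsumes (v 0) (v 1)
    | (_ + 3), r, _ => r.elim

/-- Existential formulas: built from atomic formulas and negated atomic formulas
using ∧, ∨ and ∃ only. -/
inductive IsExist : ∀ {k : ℕ}, FoilLang.BoundedFormula (Fin 1) k → Prop
  | atomic {k} {φ : FoilLang.BoundedFormula (Fin 1) k} (h : φ.IsAtomic) : IsExist φ
  | negAtomic {k} {φ : FoilLang.BoundedFormula (Fin 1) k} (h : φ.IsAtomic) : IsExist φ.not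
  | inf {k} {φ ψ : FoilLang.BoundedFormula (Fin 1) k} :
      IsExist φ → IsExist ψ → IsExist (φ ⊓ ψ)
  | sup {k} {φ ψ : FoilLang.BoundedFormula (Fin 1) k} :
      IsExist φ → IsExist ψ → IsExist (φ ⊔ ψ)
  | ex {k} {φ : FoilLang.BoundedFormula (Fin 1) (k + 1)} : IsExist φ → IsExist φ.ex

/-!
Existential formulas are preserved along embeddings. If `Pos` is empty in dimension `n`, then
`x ↦ (x, ⊥)` embeds the structure of dimension `n` into every structure of dimension `n + 1`:
`(x, ⊥)` is never full, and subsumption of `(x, ⊥)` by `(y, ⊥)` is subsumption of `x` by `y`.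
So an existential formula true at a full instance of dimension `n` is also true at the
non-full instance `(x, ⊥)` of dimension `n + 1`.
-/

theorem subsumes_snoc_iff {n : ℕ} (a b : Fin n → Option Bool) (x y : Option Bool) :
    Subsumes (Fin.snoc a x : Fin (n + 1) → Option Bool) (Fin.snoc b y) ↔
      Subsumes a b ∧ (x ≠ none → x = y) := by
  simp only [Subsumes, Fin.forall_fin_succ', Fin.snoc_castSucc, Fin.snoc_last]

theorem not_forall_snoc_none_ne_none {n : ℕ} (a : Fin n → Option Bool) :
    ¬ ∀ i, (Fin.snoc a none : Fin (n + 1) → Option Bool) i ≠ none :=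
  fun h => h (Fin.last n) (Fin.snoc_last _ _)

def snocNoneEmbedding (n : ℕ) (M : (Fin (n + 1) → Bool) → Bool) :
    @Embedding FoilLang (Fin n → Option Bool) (Fin (n + 1) → Option Bool)
      (foilStructure n fun _ => false) (foilStructure (n + 1) M) :=
  letI := foilStructure n fun _ => false
  letI := foilStructure (n + 1) M
  { toFun := fun a => Fin.snoc a none
    inj' := fun a b h => by simpa using congrArg Fin.init h
    map_fun' := fun f => f.elim
    map_rel' := fun {k} r v => by
      match k, r with
      | 1, _ =>
        refine iff_of_false ?_ fun ⟨_, _, hM⟩ => Bool.false_ne_true hM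
        rintro ⟨e', he', -⟩
        exact not_forall_snoc_none_ne_none (v 0) fun i => (he' i).trans_ne (Option.some_ne_none _)
      | 2, _ => exact subsumes_snoc_iff _ _ _ _ |>.trans (and_iff_left (absurd rfl)) }

section Preservation

variable {A B : Type*} [FoilLang.Structure A] [FoilLang.Structure B]

theorem IsExist.realize_embedding {k : ℕ} {φ : FoilLang.BoundedFormula (Fin 1) k}
    (hφ : IsExist φ) (f : A ↪[FoilLang] B) {v : Fin 1 → A} {xs : Fin k → A} :
    φ.Realize v xs → φ.Realize (f ∘ v) (f ∘ xs) := by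
  induction hφ with
  | atomic h => exact (h.isQF.realize_embedding f).mpr
  | negAtomic h => exact mt (h.isQF.realize_embedding f).mp
  | inf _ _ ihfull ihsnoc => simpa only [BoundedFormula.realize_inf] using And.imp ihfull ihsnoc
  | sup _ _ ihfull ihsnoc => simpa only [BoundedFormula.realize_sup] using Or.imp ihfull ihsnoc
  | ex _ ih =>
    simp only [BoundedFormula.realize_ex]
    rintro ⟨a, ha⟩
    exact ⟨f a, by simpa only [Fin.comp_snoc] using ih ha⟩

theorem IsExist.realize_formula_embedding {φ : FoilLang.Formula (Fin 1)} (hφ : IsExist φ)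
    (f : A ↪[FoilLang] B) {v : Fin 1 → A} : φ.Realize v → φ.Realize (f ∘ v) := by
  intro h
  have := hφ.realize_embedding f h
  rwa [Subsingleton.elim (f ∘ default) default] at this

end Preservation

theorem no_existential_formula_defines_full :
    ¬ ∃ φ : FoilLang.Formula (Fin 1), IsExist φ ∧
      ∀ (n : ℕ), 1 ≤ n → ∀ (M : (Fin n → Bool) → Bool) (e : Fin n → Option Bool),
        (letI := foilStructure n M
         φ.Realize (fun _ => e) ↔ ∀ i, e i ≠ none) := by
  rintro ⟨φ, hφ, hdef⟩
  let full : Fin 1 → Option Bool := fun _ => some true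
  have hfull : (letI := foilStructure 1 fun _ => false; φ.Realize fun _ => full) :=
    (hdef 1 le_rfl _ full).mpr fun _ => Option.some_ne_none _
  have hsnoc := @IsExist.realize_formula_embedding _ _ (foilStructure 1 fun _ => false)
    (foilStructure 2 fun _ => false) _ hφ (snocNoneEmbedding 1 fun _ => false) _ hfull
  exact not_forall_snoc_none_ne_none full ((hdef 2 one_le_two _ _).mp hsnoc)
end
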